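/- (Claim 2) Let h : ω → ω be a rigid surjection and define g : P(ω) → P(ω) by g(A) = h⁻¹(A). Then g is an embedding with respect to the lexicographic order: for all A, B ⊆ ω, A ≤_lex B if and only if g(A) ≤_lex g(B). -/
import Mathlib


/-- Rigid surjection `ω → ω`. -/
def RS (f : ℕ → ℕ) : Prop :=
  Function.Surjective f ∧ ∀ ⦃m n : ℕ⦄, m < n →
    sInf {x : ℕ | f x = m} < sInf {x : ℕ | f x = n}

/-- The lexicographic order on `P(ω)`: `A ≤_lex B` iff `A ⊆ B`, or `A, B` are
`⊆`-incomparable and `min(B \ A) < min(A \ B)`. -/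
def lexSet (A B : Set ℕ) : Prop :=
  A ⊆ B ∨ (¬ A ⊆ B ∧ ¬ B ⊆ A ∧ sInf (B \ A) < sInf (A \ B))

lemma rs_key (h : ℕ → ℕ) (hh : RS h) {S T : Set ℕ} (hS : S.Nonempty) (hT : T.Nonempty)
    (hst : sInf S < sInf T) : sInf (h ⁻¹' S) < sInf (h ⁻¹' T) := by
  obtain ⟨hsurj, hrig⟩ := hh
  have hTpre : (h ⁻¹' T).Nonempty := by
    obtain ⟨t, ht⟩ := hT
    obtain ⟨x, hx⟩ := hsurj t
    exact ⟨x, by simp [Set.mem_preimage, hx, ht]⟩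
  set y := sInf (h ⁻¹' T) with hy
  have hyT : h y ∈ T := Nat.sInf_mem hTpre
  have hs : sInf S < h y := lt_of_lt_of_le hst (Nat.sInf_le hyT)
  have h1 : sInf {x : ℕ | h x = sInf S} < sInf {x : ℕ | h x = h y} := hrig hs
  have h2 : sInf {x : ℕ | h x = h y} ≤ y := Nat.sInf_le (by simp)
  have hne : {x : ℕ | h x = sInf S}.Nonempty := hsurj (sInf S)
  have hmem : sInf {x : ℕ | h x = sInf S} ∈ {x : ℕ | h x = sInf S} := Nat.sInf_mem hne
  have h3 : sInf (h ⁻¹' S) ≤ sInf {x : ℕ | h x = sInf S} := by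
    apply Nat.sInf_le
    show h _ ∈ S
    rw [hmem]
    exact Nat.sInf_mem hS
  omega

/-- Claim 2: for a rigid surjection `h : ω → ω`, the map `A ↦ h⁻¹(A)` is an
embedding with respect to the lexicographic order on `P(ω)`. -/
theorem preimage_lex_embedding (h : ℕ → ℕ) (hh : RS h) :
    ∀ A B : Set ℕ, lexSet A B ↔ lexSet (h ⁻¹' A) (h ⁻¹' B) := by
  intro A B
  have hsurj := hh.1
  have sub_iff : ∀ X Y : Set ℕ, X ⊆ Y ↔ h ⁻¹' X ⊆ h ⁻¹' Y := by
    intro X Y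
    constructor
    · exact fun hxy x hx => hxy hx
    · intro hp x hx
      obtain ⟨y, rfl⟩ := hsurj x
      exact hp hx
  have diff_eq : ∀ X Y : Set ℕ, h ⁻¹' X \ h ⁻¹' Y = h ⁻¹' (X \ Y) := fun X Y => rfl
  have ne_of_nsub : ∀ X Y : Set ℕ, ¬ X ⊆ Y → (X \ Y).Nonempty := by
    intro X Y hn
    obtain ⟨a, ha, hna⟩ := Set.not_subset.mp hn
    exact ⟨a, ha, hna⟩
  constructor
  · rintro (hAB | ⟨hnAB, hnBA, hlt⟩)
    · exact Or.inl ((sub_iff A B).1 hAB)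
    · refine Or.inr ⟨fun c => hnAB ((sub_iff A B).2 c), fun c => hnBA ((sub_iff B A).2 c), ?_⟩
      rw [diff_eq, diff_eq]
      exact rs_key h hh (ne_of_nsub B A hnBA) (ne_of_nsub A B hnAB) hlt
  · rintro (hAB | ⟨hn1, hn2, hlt⟩)
    · exact Or.inl ((sub_iff A B).2 hAB)
    · have hnAB : ¬ A ⊆ B := fun c => hn1 ((sub_iff A B).1 c)
      have hnBA : ¬ B ⊆ A := fun c => hn2 ((sub_iff B A).1 c)
      refine Or.inr ⟨hnAB, hnBA, ?_⟩
      rw [diff_eq, diff_eq] at hlt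
      by_contra hge
      push_neg at hge
      have hBA := ne_of_nsub B A hnBA
      have hAB' := ne_of_nsub A B hnAB
      have hne : sInf (A \ B) ≠ sInf (B \ A) := by
        intro heq
        have h1 := Nat.sInf_mem hAB'
        have h2 := Nat.sInf_mem hBA
        rw [heq] at h1
        exact h2.2 h1.1
      have : sInf (A \ B) < sInf (B \ A) := lt_of_le_of_ne hge hne
      have := rs_key h hh hAB' hBA this
      omega
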